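/- arXiv:1607.00397 — 4 statements merged into one kernel-verified Lean document; each statement's English description precedes it below -/
import Mathlib

section
/- Along any solution of the Cucker–Smale system for N agents in ℝ^d, the velocity variance satisfies the dissipation identity d/dt V(t) = −(1/N²)·Σ_{i,j=1}^N a(‖x_j(t) − x_i(t)‖)·‖v_i(t) − v_j(t)‖², and in particular V is nonincreasing: d/dt V(t) ≤ 0 for all t. -/
/-!
Write `F i = N⁻¹ ∑ₖ a_{ik} (v_k - v_i)` for the alignment force, with symmetric weights
`a_{ik} = a(‖x_k - x_i‖)`. Differentiating `V` gives `N⁻² ∑_{i,j} ⟪v_i - v_j, F_i - F_j⟫`, and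
expanding the double sum leaves `2 N ∑ᵢ ⟪v_i, F_i⟫ - 2 ⟪∑ v, ∑ F⟫`. Symmetry of the weights
makes the total force `∑ F` vanish (conservation of momentum), and symmetrizing
`∑ᵢ ⟪v_i, F_i⟫` over `i ↔ k` turns it into `-(2N)⁻¹ ∑_{i,k} a_{ik} ‖v_i - v_k‖²`.
Positivity of `a` then gives `V' ≤ 0`.
-/

open scoped RealInnerProductSpace

section SymmetricWeights

variable {ι : Type*} [Fintype ι]

theorem Finset.sum_sum_smul_swap_of_symm {R M : Type*} [SMul R M] [AddCommMonoid M]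
    {A : ι → ι → R} (hA : ∀ i k, A i k = A k i) (f : ι → ι → M) :
    ∑ i, ∑ k, A i k • f k i = ∑ i, ∑ k, A i k • f i k := by
  rw [Finset.sum_comm]
  exact Finset.sum_congr rfl fun i _ => Finset.sum_congr rfl fun k _ => by rw [hA]

variable {E : Type*} [NormedAddCommGroup E] [InnerProductSpace ℝ E]

theorem sum_sum_inner_sub_sub (u f : ι → E) :
    ∑ i, ∑ j, ⟪u i - u j, f i - f j⟫
      = 2 * (Fintype.card ι * ∑ i, ⟪u i, f i⟫ - ⟪∑ i, u i, ∑ i, f i⟫) := by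
  simp only [inner_sub_left, inner_sub_right, Finset.sum_sub_distrib, Finset.sum_const,
    Finset.card_univ, nsmul_eq_mul, ← inner_sum, ← sum_inner, ← Finset.mul_sum]
  ring

theorem sum_sum_smul_sub_eq_zero {A : ι → ι → ℝ} (hA : ∀ i k, A i k = A k i) (u : ι → E) :
    ∑ i, ∑ k, A i k • (u k - u i) = 0 := by
  simp only [smul_sub, Finset.sum_sub_distrib]
  rw [Finset.sum_sum_smul_swap_of_symm hA fun i _ => u i, sub_self]

theorem sum_inner_sum_smul_sub {A : ι → ι → ℝ} (hA : ∀ i k, A i k = A k i) (u : ι → E) :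
    ∑ i, ⟪u i, ∑ k, A i k • (u k - u i)⟫
      = -(1 / 2) * ∑ i, ∑ k, A i k * ‖u i - u k‖ ^ 2 := by
  set S := ∑ i, ∑ k, A i k • ⟪u i, u k - u i⟫
  have hS : ∑ i, ⟪u i, ∑ k, A i k • (u k - u i)⟫ = S := by
    simp only [S, inner_sum, real_inner_smul_right, smul_eq_mul]
  have hpair (y z : E) : ⟪y, z - y⟫ + ⟪z, y - z⟫ = -‖y - z‖ ^ 2 := by
    rw [← real_inner_self_eq_norm_sq]
    simp only [inner_sub_left, inner_sub_right]
    ring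
  have hswap : ∑ i, ∑ k, A i k • ⟪u k, u i - u k⟫ = S :=
    Finset.sum_sum_smul_swap_of_symm hA fun i k => ⟪u i, u k - u i⟫
  have hS2 : S + S = -∑ i, ∑ k, A i k * ‖u i - u k‖ ^ 2 := by
    nth_rw 2 [← hswap]
    simp only [S, smul_eq_mul, ← Finset.sum_add_distrib, ← mul_add, hpair, mul_neg,
      Finset.sum_neg_distrib]
  rw [hS]
  linarith

noncomputable def alignmentForce (A : ι → ι → ℝ) (u : ι → E) (i : ι) : E :=
  (Fintype.card ι : ℝ)⁻¹ • ∑ k, A i k • (u k - u i)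

theorem sum_alignmentForce {A : ι → ι → ℝ} (hA : ∀ i k, A i k = A k i) (u : ι → E) :
    ∑ i, alignmentForce A u i = 0 := by
  simp only [alignmentForce, ← Finset.smul_sum, sum_sum_smul_sub_eq_zero hA, smul_zero]

theorem sum_sum_inner_sub_alignmentForce_sub {A : ι → ι → ℝ} (hA : ∀ i k, A i k = A k i)
    (u : ι → E) :
    ∑ i, ∑ j, ⟪u i - u j, alignmentForce A u i - alignmentForce A u j⟫
      = -∑ i, ∑ j, A i j * ‖u i - u j‖ ^ 2 := by
  rcases isEmpty_or_nonempty ι with _ | _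
  · simp
  have hcard : (Fintype.card ι : ℝ) ≠ 0 := Nat.cast_ne_zero.mpr Fintype.card_ne_zero
  rw [sum_sum_inner_sub_sub, sum_alignmentForce hA, inner_zero_right, sub_zero]
  simp only [alignmentForce, inner_smul_right, ← Finset.mul_sum, sum_inner_sum_smul_sub hA]
  field_simp

end SymmetricWeights

theorem HasDerivAt.sum_sum_norm_sub_sq {ι E : Type*} [Fintype ι] [NormedAddCommGroup E]
    [InnerProductSpace ℝ E] {v : ℝ → ι → E} {v' : ι → E} {t : ℝ}
    (hv : ∀ i, HasDerivAt (fun s => v s i) (v' i) t) :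
    HasDerivAt (fun s => ∑ i, ∑ j, ‖v s i - v s j‖ ^ 2)
      (2 * ∑ i, ∑ j, ⟪v t i - v t j, v' i - v' j⟫) t := by
  simp only [Finset.mul_sum]
  exact HasDerivAt.fun_sum fun i _ => HasDerivAt.fun_sum fun j _ =>
    ((hv i).sub (hv j)).norm_sq

theorem cucker_smale_variance_dissipation_general
    {d N : ℕ}
    (a : ℝ → ℝ)
    (ha_pos : ∀ s, 0 ≤ s → 0 < a s)
    (x v : ℝ → Fin N → EuclideanSpace ℝ (Fin d))
    (hv : ∀ i t, HasDerivAt (fun s => v s i)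
      ((N : ℝ)⁻¹ • ∑ j, a ‖x t j - x t i‖ • (v t j - v t i)) t)
    (V : ℝ → ℝ)
    (hV : ∀ t, V t = (1 / (2 * (N : ℝ) ^ 2)) * ∑ i, ∑ j, ‖v t i - v t j‖ ^ 2) :
    (∀ t : ℝ, HasDerivAt V
      (-(1 / (N : ℝ) ^ 2) * ∑ i, ∑ j, a ‖x t j - x t i‖ * ‖v t i - v t j‖ ^ 2) t) ∧
    (∀ t : ℝ, deriv V t ≤ 0) := by
  have hderiv (t : ℝ) : HasDerivAt V
      (-(1 / (N : ℝ) ^ 2) * ∑ i, ∑ j, a ‖x t j - x t i‖ * ‖v t i - v t j‖ ^ 2) t := by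
    let A (i j : Fin N) : ℝ := a ‖x t j - x t i‖
    have hA (i k : Fin N) : A i k = A k i := by simp only [A, norm_sub_rev]
    have hv' (i : Fin N) : HasDerivAt (fun s => v s i) (alignmentForce A (v t) i) t := by
      simpa [alignmentForce, A] using hv i t
    have h := (HasDerivAt.sum_sum_norm_sub_sq hv').const_mul (1 / (2 * (N : ℝ) ^ 2))
    rw [sum_sum_inner_sub_alignmentForce_sub hA] at h
    rw [show V = _ from funext hV]
    exact h.congr_deriv (by ring)
  refine ⟨hderiv, fun t => ?_⟩
  have hsum : 0 ≤ ∑ i, ∑ j, a ‖x t j - x t i‖ * ‖v t i - v t j‖ ^ 2 :=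
    Finset.sum_nonneg fun i _ => Finset.sum_nonneg fun j _ =>
      mul_nonneg (ha_pos _ (norm_nonneg _)).le (sq_nonneg _)
  rw [(hderiv t).deriv]
  exact mul_nonpos_of_nonpos_of_nonneg (neg_nonpos.mpr (by positivity)) hsum

/-- Along any solution of the Cucker–Smale system, the velocity
variance satisfies `d/dt V(t) = −(1/N²)·Σ_{i,j} a(‖x_j − x_i‖)·‖v_i − v_j‖²`, and in
particular `V` is nonincreasing: `d/dt V(t) ≤ 0` for all `t`. -/
theorem cucker_smale_variance_dissipation
    {d N : ℕ} (hN : 0 < N)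
    (a : ℝ → ℝ)
    (ha_pos : ∀ s, 0 ≤ s → 0 < a s)
    (ha_anti : AntitoneOn a (Set.Ici 0))
    (ha_smooth : ContDiffOn ℝ 1 a (Set.Ici 0))
    (x v : ℝ → Fin N → EuclideanSpace ℝ (Fin d))
    (hx : ∀ i t, HasDerivAt (fun s => x s i) (v t i) t)
    (hv : ∀ i t, HasDerivAt (fun s => v s i)
      ((N : ℝ)⁻¹ • ∑ j, a ‖x t j - x t i‖ • (v t j - v t i)) t)
    (V : ℝ → ℝ)
    (hV : ∀ t, V t = (1 / (2 * (N : ℝ) ^ 2)) * ∑ i, ∑ j, ‖v t i - v t j‖ ^ 2) :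
    (∀ t : ℝ, HasDerivAt V
      (-(1 / (N : ℝ) ^ 2) * ∑ i, ∑ j, a ‖x t j - x t i‖ * ‖v t i - v t j‖ ^ 2) t) ∧
    (∀ t : ℝ, deriv V t ≤ 0) :=
  cucker_smale_variance_dissipation_general a ha_pos x v hv V hV
end

section
/- Let (x(t), v(t)) : [0,∞) → ℝ × ℝ be a solution of ẋ = v, v̇ = −v/(1 + x²) with x(0) = x₀ and v(0) = v₀ > 0. If arctan(x₀) + v₀ ≥ π/2 + ε for some ε > 0, then |v(t)| > ε for every t > 0; in particular the relative velocity v(t) does not converge to 0, i.e. the corresponding two-agent Cucker–Smale system does not tend to flocking. -/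
open Filter

/-! `arctan x + v` is a first integral of the system. Since `arctan < π/2`, the condition
`arctan x₀ + v₀ ≥ π/2 + ε` forces `v(t) > ε` for all times. -/

theorem hasDerivAt_arctan_add_of_cucker_smale {x v : ℝ → ℝ}
    (hx : ∀ t, HasDerivAt x (v t) t)
    (hv : ∀ t, HasDerivAt v (-(v t) / (1 + (x t) ^ 2)) t) (t : ℝ) :
    HasDerivAt (fun s => Real.arctan (x s) + v s) 0 t :=
  (((Real.hasDerivAt_arctan (x t)).comp t (hx t)).add (hv t)).congr_deriv (by ring)

theorem arctan_add_eq_of_cucker_smale {x v : ℝ → ℝ}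
    (hx : ∀ t, HasDerivAt x (v t) t)
    (hv : ∀ t, HasDerivAt v (-(v t) / (1 + (x t) ^ 2)) t) (t s : ℝ) :
    Real.arctan (x t) + v t = Real.arctan (x s) + v s :=
  is_const_of_deriv_eq_zero
    (fun r => (hasDerivAt_arctan_add_of_cucker_smale hx hv r).differentiableAt)
    (fun r => (hasDerivAt_arctan_add_of_cucker_smale hx hv r).deriv) t s

theorem lt_of_pi_div_two_add_le_arctan_add {x v : ℝ → ℝ}
    (hx : ∀ t, HasDerivAt x (v t) t)
    (hv : ∀ t, HasDerivAt v (-(v t) / (1 + (x t) ^ 2)) t) {ε : ℝ}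
    (hcond : Real.pi / 2 + ε ≤ Real.arctan (x 0) + v 0) (t : ℝ) :
    ε < v t := by
  have h := arctan_add_eq_of_cucker_smale hx hv t 0
  linarith [Real.arctan_lt_pi_div_two (x t)]

theorem not_tendsto_nhds_zero_of_forall_lt {α : Type*} {l : Filter α} [l.NeBot] {f : α → ℝ}
    {ε : ℝ} (hε : 0 < ε) (hf : ∀ t, ε < f t) : ¬ Tendsto f l (nhds 0) := fun h =>
  let ⟨t, ht⟩ := (h.eventually (gt_mem_nhds hε)).exists
  (hf t).not_gt ht

theorem two_agent_cucker_smale_no_flocking_general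
    (x v : ℝ → ℝ) (x₀ v₀ : ℝ)
    (hx : ∀ t, HasDerivAt x (v t) t)
    (hv : ∀ t, HasDerivAt v (-(v t) / (1 + (x t) ^ 2)) t)
    (hx0 : x 0 = x₀) (hv0 : v 0 = v₀)
    (ε : ℝ) (hε : 0 < ε)
    (hcond : Real.pi / 2 + ε ≤ Real.arctan x₀ + v₀) :
    (∀ t > (0 : ℝ), ε < |v t|) ∧ ¬ Tendsto v atTop (nhds 0) := by
  subst hx0 hv0
  have hlt := lt_of_pi_div_two_add_le_arctan_add hx hv hcond
  exact ⟨fun t _ => (hlt t).trans_le (le_abs_self _), not_tendsto_nhds_zero_of_forall_lt hε hlt⟩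

/-- For a solution of `ẋ = v`, `v̇ = −v/(1+x²)` with `v₀ > 0`, if
`arctan(x₀) + v₀ ≥ π/2 + ε` for some `ε > 0`, then `|v(t)| > ε` for every `t > 0`;
in particular `v(t)` does not converge to `0`, i.e. the corresponding two-agent
Cucker–Smale system does not tend to flocking. -/
theorem two_agent_cucker_smale_no_flocking
    (x v : ℝ → ℝ) (x₀ v₀ : ℝ)
    (hx : ∀ t, HasDerivAt x (v t) t)
    (hv : ∀ t, HasDerivAt v (-(v t) / (1 + (x t) ^ 2)) t)
    (hx0 : x 0 = x₀) (hv0 : v 0 = v₀) (hv0pos : 0 < v₀)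
    (ε : ℝ) (hε : 0 < ε)
    (hcond : Real.pi / 2 + ε ≤ Real.arctan x₀ + v₀) :
    (∀ t > (0 : ℝ), ε < |v t|) ∧ ¬ Tendsto v atTop (nhds 0) :=
  two_agent_cucker_smale_no_flocking_general x v x₀ v₀ hx hv hx0 hv0 ε hε hcond
end

section
/- For the Hegselmann–Krause system on ℝ with N = 3 agents and confidence radius r > 0, the set of equilibria equals the union of the following 13 pairwise disjoint manifolds: the line {x₁ = x₂ = x₃}; the three half-planes {x_i = x_j, x_k > x_i + r} and the three half-planes {x_i = x_j, x_k < x_i − r} (for {i,j,k} = {1,2,3} with i < j); and the six open 3-dimensional sets {x_i + r < x_j < x_k − r} for (i,j,k) ranging over permutations of (1,2,3). Equivalently, (x₁, x₂, x₃) is an equilibrium if and only if for every pair i, j, either x_i = x_j or |x_i − x_j| > r. -/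
/-!
Suppose some pair of agents is at distinct but `r`-close opinions, and among all agents in
such a pair pick one, `m`, of minimal opinion. Each neighbour of `m` either shares its opinion
or is itself in such a pair, hence lies weakly above `m`; its partner lies strictly above.
So the drift of `m` is positive and the configuration is not an equilibrium.
-/

open Finset

namespace HegselmannKrause

variable {ι : Type*} [Fintype ι]

noncomputable def neighbors (r : ℝ) (x : ι → ℝ) (i : ι) : Finset ι :=
  univ.filter fun j => |x i - x j| ≤ r

theorem mem_neighbors {r : ℝ} {x : ι → ℝ} {i j : ι} :
    j ∈ neighbors r x i ↔ |x i - x j| ≤ r := by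
  simp [neighbors]

theorem sum_neighbors_eq_zero_of_eq_or_lt_abs {r : ℝ} {x : ι → ℝ} {i : ι}
    (h : ∀ j, x i = x j ∨ r < |x i - x j|) : ∑ j ∈ neighbors r x i, (x j - x i) = 0 :=
  sum_eq_zero fun j hj => by
    rcases h j with heq | hfar
    · rw [heq, sub_self]
    · exact absurd (mem_neighbors.1 hj) hfar.not_ge

theorem eq_or_lt_abs_of_sum_neighbors_eq_zero {r : ℝ} {x : ι → ℝ}
    (h : ∀ i, ∑ j ∈ neighbors r x i, (x j - x i) = 0) (i j : ι) :
    x i = x j ∨ r < |x i - x j| := by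
  classical
  by_contra! hij
  set close := univ.filter fun k => ∃ l, x k ≠ x l ∧ |x k - x l| ≤ r
  obtain ⟨m, hm_close, hm_min⟩ := close.exists_min_image x ⟨i, by simpa [close] using ⟨j, hij⟩⟩
  obtain ⟨l, hml, hml_le⟩ := (mem_filter.1 hm_close).2
  have above : ∀ k ∈ neighbors r x m, x m ≤ x k := by
    intro k hk
    rcases eq_or_ne (x k) (x m) with hkm | hkm
    · exact hkm.ge
    · refine hm_min k (mem_filter.2 ⟨mem_univ k, m, hkm, ?_⟩)
      rw [abs_sub_comm]
      exact mem_neighbors.1 hk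
  have hl := mem_neighbors.2 hml_le
  have drift_pos : 0 < ∑ k ∈ neighbors r x m, (x k - x m) :=
    sum_pos' (fun k hk => sub_nonneg.2 (above k hk))
      ⟨l, hl, sub_pos.2 ((above l hl).lt_of_ne hml)⟩
  exact drift_pos.ne' (h m)

end HegselmannKrause

theorem Finset.inv_card_mul_sum_eq_zero_iff {ι K : Type*} [DivisionRing K] [CharZero K]
    {s : Finset ι} {f : ι → K} : (#s : K)⁻¹ * ∑ i ∈ s, f i = 0 ↔ ∑ i ∈ s, f i = 0 := by
  refine ⟨fun h => ?_, fun h => by rw [h, mul_zero]⟩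
  rcases mul_eq_zero.1 h with hs | hs
  · rw [inv_eq_zero, Nat.cast_eq_zero, card_eq_zero] at hs
    rw [hs, sum_empty]
  · exact hs

theorem hegselmann_krause_equilibria_three_agents_general
    (r : ℝ) (x : Fin 3 → ℝ) :
    (∀ i : Fin 3,
      ((((Finset.univ.filter fun j => |x i - x j| ≤ r)).card : ℝ))⁻¹ *
        ∑ j ∈ Finset.univ.filter (fun j => |x i - x j| ≤ r), (x j - x i) = 0)
    ↔ (∀ i j : Fin 3, x i = x j ∨ r < |x i - x j|) := by
  simp only [Finset.inv_card_mul_sum_eq_zero_iff]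
  exact ⟨HegselmannKrause.eq_or_lt_abs_of_sum_neighbors_eq_zero,
    fun h i => HegselmannKrause.sum_neighbors_eq_zero_of_eq_or_lt_abs (h i)⟩

/-- For the Hegselmann–Krause system on `ℝ` with `N = 3` agents and
confidence radius `r > 0`, a configuration `(x₁, x₂, x₃)` is an equilibrium if and
only if for every pair `i, j`, either `x_i = x_j` or `|x_i − x_j| > r` (this set is
the union of the 13 pairwise disjoint manifolds enumerated in the paper). -/
theorem hegselmann_krause_equilibria_three_agents
    (r : ℝ) (hr : 0 < r) (x : Fin 3 → ℝ) :
    (∀ i : Fin 3,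
      ((((Finset.univ.filter fun j => |x i - x j| ≤ r)).card : ℝ))⁻¹ *
        ∑ j ∈ Finset.univ.filter (fun j => |x i - x j| ≤ r), (x j - x i) = 0)
    ↔ (∀ i j : Fin 3, x i = x j ∨ r < |x i - x j|) :=
  hegselmann_krause_equilibria_three_agents_general r x
end

section
/- Let p_1, …, p_N ∈ ℝ^d and M > 0. Then the minimum of Σ_{i=1}^N ⟨p_i, u_i⟩ over all (u_1, …, u_N) ∈ (ℝ^d)^N satisfying Σ_{i=1}^N ‖u_i‖ ≤ M equals −M·max_{1≤i≤N} ‖p_i‖. Moreover, if j is an index achieving the maximum and ‖p_j‖ > 0, then the componentwise sparse choice u_j = −M·p_j/‖p_j‖ and u_i = 0 for i ≠ j attains this minimum; and if ‖p_j‖ > ‖p_i‖ for all i ≠ j, this sparse choice is the unique minimizer. -/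
/-!
Cauchy–Schwarz gives `⟪p i, u i⟫ ≥ -‖p i‖ * ‖u i‖ ≥ -‖p j‖ * ‖u i‖` for every `i`, and summing
against the budget `∑ i, ‖u i‖ ≤ M` bounds the objective below by `-(M * ‖p j‖)`; the sparse
control spends the whole budget on `p j`, antiparallel to it, and meets the bound. Conversely,
equality forces every intermediate inequality to be tight: a strictly smaller `‖p i‖` leaves no
room for `u i ≠ 0`, the budget is used up by `u j`, and equality in Cauchy–Schwarz makes `u j` a
negative multiple of `p j`.
-/

open RealInnerProductSpace Finset

section InnerProductSpace

variable {E : Type*} [NormedAddCommGroup E] [InnerProductSpace ℝ E]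

lemma neg_mul_norm_le_inner_of_norm_le {x y : E} {c : ℝ} (hx : ‖x‖ ≤ c) :
    -(c * ‖y‖) ≤ ⟪x, y⟫ :=
  (neg_le_neg (mul_le_mul_of_nonneg_right hx (norm_nonneg y))).trans
    (neg_le_of_abs_le (abs_real_inner_le_norm x y))

lemma eq_zero_of_inner_eq_neg_mul_norm {x y : E} {c : ℝ} (hx : ‖x‖ < c)
    (h : ⟪x, y⟫ = -(c * ‖y‖)) : y = 0 := by
  by_contra hy
  have hlt := mul_lt_mul_of_pos_right hx (norm_pos_iff.2 hy)
  linarith [neg_mul_norm_le_inner_of_norm_le (x := x) (y := y) le_rfl]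

lemma eq_neg_div_norm_smul_of_inner_eq_neg_mul_norm {x y : E} (hx : x ≠ 0)
    (h : ⟪x, y⟫ = -(‖x‖ * ‖y‖)) : y = -(‖y‖ / ‖x‖) • x := by
  have hneg : (‖-y‖ / ‖x‖) • x = -y :=
    (inner_eq_norm_mul_iff_div hx).1 (by rw [inner_neg_right, h, norm_neg, neg_neg]; rfl)
  rw [norm_neg] at hneg
  rw [neg_smul, hneg, neg_neg]

lemma inner_neg_div_norm_smul_self (M : ℝ) {x : E} (hx : x ≠ 0) :
    ⟪x, -(M / ‖x‖) • x⟫ = -(M * ‖x‖) := by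
  have hx' : ‖x‖ ≠ 0 := norm_ne_zero_iff.2 hx
  rw [real_inner_smul_right, real_inner_self_eq_norm_sq]
  field_simp

lemma norm_neg_div_norm_smul_self {M : ℝ} (hM : 0 ≤ M) {x : E} (hx : x ≠ 0) :
    ‖-(M / ‖x‖) • x‖ = M := by
  rw [norm_smul, norm_neg, Real.norm_of_nonneg (by positivity),
    div_mul_cancel₀ M (norm_ne_zero_iff.2 hx)]

end InnerProductSpace

section Families

variable {ι E : Type*} [Fintype ι] [NormedAddCommGroup E] [InnerProductSpace ℝ E]
  {p u : ι → E} {c M : ℝ}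

lemma neg_mul_le_sum_inner (hp : ∀ i, ‖p i‖ ≤ c) (hc : 0 ≤ c) (hu : ∑ i, ‖u i‖ ≤ M) :
    -(M * c) ≤ ∑ i, ⟪p i, u i⟫ :=
  calc -(M * c) ≤ -(c * ∑ i, ‖u i‖) := by
        rw [mul_comm]
        exact neg_le_neg (mul_le_mul_of_nonneg_left hu hc)
    _ = ∑ i, -(c * ‖u i‖) := by rw [sum_neg_distrib, mul_sum]
    _ ≤ ∑ i, ⟪p i, u i⟫ := sum_le_sum fun i _ => neg_mul_norm_le_inner_of_norm_le (hp i)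

lemma eq_ite_of_sum_inner_eq [DecidableEq ι] {j : ι} (hpj : p j ≠ 0)
    (hj : ∀ i, i ≠ j → ‖p i‖ < ‖p j‖) (hu : ∑ i, ‖u i‖ ≤ M)
    (h : ∑ i, ⟪p i, u i⟫ = -(M * ‖p j‖)) :
    u = fun k => if k = j then -(M / ‖p j‖) • p j else 0 := by
  have hp i : ‖p i‖ ≤ ‖p j‖ := by
    rcases eq_or_ne i j with rfl | hi
    exacts [le_rfl, (hj i hi).le]
  have hlow i : -(‖p j‖ * ‖u i‖) ≤ ⟪p i, u i⟫ := neg_mul_norm_le_inner_of_norm_le (hp i)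
  have htight : ∑ i, -(‖p j‖ * ‖u i‖) = ∑ i, ⟪p i, u i⟫ := by
    refine le_antisymm (sum_le_sum fun i _ => hlow i) ?_
    rw [h, sum_neg_distrib, ← mul_sum, mul_comm]
    exact neg_le_neg (mul_le_mul_of_nonneg_left hu (norm_nonneg _))
  have hterm i : ⟪p i, u i⟫ = -(‖p j‖ * ‖u i‖) :=
    ((sum_eq_sum_iff_of_le fun i _ => hlow i).1 htight i (mem_univ i)).symm
  have hzero i (hi : i ≠ j) : u i = 0 := eq_zero_of_inner_eq_neg_mul_norm (hj i hi) (hterm i)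
  have hnorm : ‖u j‖ = M := by
    have hsum : ∑ i, ‖u i‖ = ‖u j‖ := Fintype.sum_eq_single j fun i hi => by simp [hzero i hi]
    rw [h, sum_neg_distrib, ← mul_sum, hsum, neg_inj, mul_comm] at htight
    exact mul_right_cancel₀ (norm_ne_zero_iff.2 hpj) htight
  funext k
  by_cases hk : k = j
  · subst hk
    simpa [hnorm] using eq_neg_div_norm_smul_of_inner_eq_neg_mul_norm hpj (hterm k)
  · simp [hk, hzero k hk]

end Families

/-- For `p_1, …, p_N ∈ ℝ^d` and `M > 0`, the minimum of
`Σ_i ⟪p_i, u_i⟫` over all `u` with `Σ_i ‖u_i‖ ≤ M` equals `−M·max_i ‖p_i‖`. If `j`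
achieves the maximum and `‖p_j‖ > 0`, the sparse choice `u_j = −M·p_j/‖p_j‖`,
`u_i = 0` for `i ≠ j`, attains the minimum; if moreover `‖p_j‖ > ‖p_i‖` for all
`i ≠ j`, then that sparse choice is the unique minimizer. -/
theorem sparse_minimizer
    {d N : ℕ} (M : ℝ) (hM : 0 < M)
    (p : Fin N → EuclideanSpace ℝ (Fin d))
    (j : Fin N) (hj : ∀ i, ‖p i‖ ≤ ‖p j‖) :
    IsLeast {s : ℝ | ∃ u : Fin N → EuclideanSpace ℝ (Fin d),
        (∑ i, ‖u i‖) ≤ M ∧ s = ∑ i, ⟪p i, u i⟫} (-(M * ‖p j‖)) ∧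
    (0 < ‖p j‖ →
      ((∑ i, ⟪p i, (fun k => if k = j then -(M / ‖p j‖) • p j else 0) i⟫) = -(M * ‖p j‖)) ∧
      ((∀ i, i ≠ j → ‖p i‖ < ‖p j‖) →
        ∀ u : Fin N → EuclideanSpace ℝ (Fin d), (∑ i, ‖u i‖) ≤ M →
          (∑ i, ⟪p i, u i⟫) = -(M * ‖p j‖) →
          u = fun k => if k = j then -(M / ‖p j‖) • p j else 0)) := by
  refine ⟨⟨?_, ?_⟩, fun hpj => ⟨?_, fun hstrict u hu h => ?_⟩⟩
  · rcases eq_or_ne (p j) 0 with h0 | h0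
    · exact ⟨0, by simpa using hM.le, by simp [h0]⟩
    · exact ⟨fun k => if k = j then -(M / ‖p j‖) • p j else 0,
        by simpa [apply_ite] using (norm_neg_div_norm_smul_self hM.le h0).le,
        by simpa [apply_ite] using (inner_neg_div_norm_smul_self M h0).symm⟩
  · rintro s ⟨u, hu, rfl⟩
    exact neg_mul_le_sum_inner hj (norm_nonneg _) hu
  · simpa [apply_ite] using inner_neg_div_norm_smul_self M (norm_pos_iff.1 hpj)
  · exact eq_ite_of_sum_inner_eq (norm_pos_iff.1 hpj) hstrict hu h
end
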